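/- arXiv:1608.06407 — 5 statements merged into one kernel-verified Lean document; each statement's English description precedes it below -/
import Mathlib

section
/- If H is an atomic monoid that is not half-factorial (i.e., its set of distances Δ(H) is nonempty), then min Δ(H) = gcd Δ(H). -/
/-- Set of lengths of factorizations of `a` into irreducible elements (atoms). -/
def LengthsOf {M : Type*} [CommMonoid M] (a : M) : Set ℕ :=
  {n | ∃ s : Multiset M, Multiset.card s = n ∧ (∀ x ∈ s, Irreducible x) ∧ s.prod = a}

/-- The set of distances (delta set) of a monoid. -/
def DeltaSet (M : Type*) [CommMonoid M] : Set ℕ :=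
  {d | 0 < d ∧ ∃ (a : M) (k : ℕ), k ∈ LengthsOf a ∧ k + d ∈ LengthsOf a ∧
      ∀ ℓ ∈ LengthsOf a, ¬(k < ℓ ∧ ℓ < k + d)}

/-- A monoid is atomic if every nonunit is a finite product of irreducible elements. -/
def IsAtomicMonoid (M : Type*) [CommMonoid M] : Prop :=
  ∀ a : M, ¬ IsUnit a → ∃ s : Multiset M, (∀ x ∈ s, Irreducible x) ∧ s.prod = a

universe u

/-- A monoid is Krull if it admits a divisor homomorphism into a free abelian monoid. -/
def IsKrullMonoid (M : Type u) [CommMonoid M] : Prop :=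
  ∃ (P : Type u) (φ : M →* Multiplicative (P →₀ ℕ)), ∀ a b : M, a ∣ b ↔ φ a ∣ φ b

/-- The monoid of zero-sum sequences over `G₀ ⊆ G`, as a submonoid of the
free abelian monoid (written multiplicatively) of multisets over `G`. -/
def ZeroSumMonoid {G : Type*} [AddCommGroup G] (G₀ : Set G) :
    Submonoid (Multiplicative (Multiset G)) where
  carrier := {S | (∀ x ∈ Multiplicative.toAdd S, x ∈ G₀) ∧ (Multiplicative.toAdd S).sum = 0}
  one_mem' := by simp
  mul_mem' := by
    intro a b ha hb
    refine ⟨?_, ?_⟩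
    · intro x hx
      rw [toAdd_mul, Multiset.mem_add] at hx
      exact hx.elim (ha.1 x) (hb.1 x)
    · rw [toAdd_mul, Multiset.sum_add, ha.2, hb.2, add_zero]

lemma lengths_mul {M : Type*} [CommMonoid M] {a b : M} {x y : ℕ}
    (hx : x ∈ LengthsOf a) (hy : y ∈ LengthsOf b) : x + y ∈ LengthsOf (a * b) := by
  obtain ⟨s, hs1, hs2, hs3⟩ := hx
  obtain ⟨t, ht1, ht2, ht3⟩ := hy
  exact ⟨s + t, by simp [hs1, ht1],
    fun z hz => (Multiset.mem_add.1 hz).elim (hs2 z) (ht2 z),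
    by rw [Multiset.prod_add, hs3, ht3]⟩

lemma lengths_pow {M : Type*} [CommMonoid M] {b : M} {m : ℕ} (hm : m ∈ LengthsOf b)
    (q : ℕ) : q * m ∈ LengthsOf (b ^ q) := by
  induction q with
  | zero => refine ⟨0, ?_, ?_, ?_⟩ <;> simp
  | succ n ih =>
    rw [pow_succ, Nat.succ_mul]
    exact lengths_mul ih hm

lemma exists_delta_le {M : Type*} [CommMonoid M] {c : M} {x y : ℕ}
    (hx : x ∈ LengthsOf c) (hy : y ∈ LengthsOf c) (hxy : x < y) :
    ∃ d ∈ DeltaSet M, d ≤ y - x := by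
  set T : Set ℕ := {n | n ∈ LengthsOf c ∧ x ≤ n ∧ n < y} with hT
  have hTne : T.Nonempty := ⟨x, hx, le_refl x, hxy⟩
  have hTbdd : BddAbove T := ⟨y, fun n hn => hn.2.2.le⟩
  obtain ⟨hℓL, hℓx, hℓy⟩ := Nat.sSup_mem hTne hTbdd
  refine ⟨y - sSup T, ⟨Nat.sub_pos_of_lt hℓy, c, sSup T, hℓL, ?_, ?_⟩,
    Nat.sub_le_sub_left hℓx y⟩
  · rwa [Nat.add_sub_cancel' hℓy.le]
  · rintro n hn ⟨h1, h2⟩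
    rw [Nat.add_sub_cancel' hℓy.le] at h2
    exact absurd (le_csSup hTbdd (show n ∈ T from ⟨hn, hℓx.trans h1.le, h2⟩))
      (not_le.2 h1)

/-- If `H` is atomic and not half-factorial, then `min Δ(H) = gcd Δ(H)`,
i.e. the minimum of the set of distances belongs to it and divides all its elements. -/
theorem min_delta_eq_gcd_delta {M : Type*} [CancelCommMonoid M]
    (hatomic : IsAtomicMonoid M) (hne : (DeltaSet M).Nonempty) :
    sInf (DeltaSet M) ∈ DeltaSet M ∧ ∀ d ∈ DeltaSet M, sInf (DeltaSet M) ∣ d := by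
  have hmem := Nat.sInf_mem hne
  refine ⟨hmem, fun d hd => ?_⟩
  set d₁ := sInf (DeltaSet M) with hd₁
  by_contra hdvd
  obtain ⟨hd₁pos, a₁, m, hm, hm₁, -⟩ := hmem
  obtain ⟨hdpos, a, k, hk, hkd, -⟩ := hd
  have hrpos : 0 < d % d₁ :=
    Nat.pos_of_ne_zero fun h => hdvd (Nat.dvd_of_mod_eq_zero h)
  have hrlt : d % d₁ < d₁ := Nat.mod_lt _ hd₁pos
  set q := d / d₁ with hq
  have hx : k + q * (m + d₁) ∈ LengthsOf (a * a₁ ^ q) :=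
    lengths_mul hk (lengths_pow hm₁ q)
  have hy : (k + d) + q * m ∈ LengthsOf (a * a₁ ^ q) :=
    lengths_mul hkd (lengths_pow hm q)
  have e1 : q * (m + d₁) = q * m + q * d₁ := Nat.mul_add q m d₁
  have e2 : q * d₁ = d₁ * q := Nat.mul_comm q d₁
  have hdm : d₁ * q + d % d₁ = d := Nat.div_add_mod d d₁
  have hlt : k + q * (m + d₁) < (k + d) + q * m := by omega
  obtain ⟨d', hd'Δ, hd'le⟩ := exists_delta_le hx hy hlt
  have h1 : d₁ ≤ d' := Nat.sInf_le hd'Δ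
  omega
end

section
/- Let G be an abelian group and g ∈ G an element of finite order n ≥ 3. Then the set of atoms of the monoid B({g,−g}) of zero-sum sequences over {g,−g} is exactly {gⁿ, (−g)ⁿ, g·(−g)} (where g ≠ −g). -/
universe u

section Aux

variable {G : Type*} [AddCommGroup G] {g : G} {n : ℕ}
variable [DecidableEq G]

open Multiset Multiplicative

lemma zsm_decomp (T : Multiset G) (hT : ∀ x ∈ T, x ∈ ({g, -g} : Set G)) :
    ∃ a b : ℕ, T = replicate a g + replicate b (-g) := by
  refine ⟨T.count g, Multiset.card (T.filter (fun x => ¬ x = g)), ?_⟩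
  have h2 : T.filter (fun x => ¬ x = g) =
      replicate (Multiset.card (T.filter (fun x => ¬ x = g))) (-g) := by
    rw [Multiset.eq_replicate_card]
    intro b hb
    rw [Multiset.mem_filter] at hb
    rcases hT b hb.1 with h | h
    · exact absurd h hb.2
    · exact h
  conv_lhs => rw [← Multiset.filter_add_not (fun x => x = g) T]
  rw [Multiset.filter_eq', ← h2]

lemma zsm_count₁ (hne : g ≠ -g) (a b : ℕ) :
    (replicate a g + replicate b (-g)).count g = a := by
  simp [Multiset.count_replicate, Ne.symm hne]

lemma zsm_count₂ (hne : g ≠ -g) (a b : ℕ) :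
    (replicate a g + replicate b (-g)).count (-g) = b := by
  simp [Multiset.count_replicate, hne]

lemma zsm_sum_iff (hg : addOrderOf g = n) (a b : ℕ) :
    (replicate a g + replicate b (-g)).sum = 0 ↔ (n : ℤ) ∣ (a : ℤ) - b := by
  have key : ((a : ℤ) - (b : ℤ)) • g = (replicate a g + replicate b (-g)).sum := by
    rw [Multiset.sum_add, Multiset.sum_replicate, Multiset.sum_replicate, sub_smul,
      natCast_zsmul, natCast_zsmul, smul_neg, sub_eq_add_neg]
  rw [← hg, addOrderOf_dvd_iff_zsmul_eq_zero, key]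

lemma zsm_mem (hg : addOrderOf g = n) (a b : ℕ) (h : (n : ℤ) ∣ (a : ℤ) - b) :
    ofAdd (replicate a g + replicate b (-g)) ∈ ZeroSumMonoid ({g, -g} : Set G) := by
  constructor
  · intro x hx
    rw [toAdd_ofAdd, Multiset.mem_add] at hx
    rcases hx with hx | hx
    · rw [Multiset.eq_of_mem_replicate hx]; exact Set.mem_insert _ _
    · rw [Multiset.eq_of_mem_replicate hx]; exact Set.mem_insert_iff.2 (Or.inr rfl)
  · rw [toAdd_ofAdd]
    exact (zsm_sum_iff hg a b).2 h

lemma zsm_isUnit_iff {G₀ : Set G} (x : ↥(ZeroSumMonoid G₀)) :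
    IsUnit x ↔ (x : Multiplicative (Multiset G)) = 1 := by
  constructor
  · intro h
    obtain ⟨y, hy⟩ := h.exists_right_inv
    have h1 : (x : Multiplicative (Multiset G)) * (y : Multiplicative (Multiset G)) = 1 :=
      congrArg Subtype.val hy
    have h2 := congrArg Multiplicative.toAdd h1
    rw [toAdd_mul, toAdd_one] at h2
    have h3 := congrArg Multiset.card h2
    rw [Multiset.card_add, Multiset.card_zero] at h3
    have h4 : Multiplicative.toAdd (x : Multiplicative (Multiset G)) = 0 :=
      Multiset.card_eq_zero.mp (by omega)
    rw [← ofAdd_toAdd (x : Multiplicative (Multiset G)), h4, ofAdd_zero]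
  · intro h
    have : x = 1 := Subtype.ext h
    rw [this]; exact isUnit_one

lemma zsm_unit_iff' {G₀ : Set G} (x : ↥(ZeroSumMonoid G₀)) (a b : ℕ)
    (hx : (x : Multiplicative (Multiset G)) = ofAdd (replicate a g + replicate b (-g))) :
    IsUnit x ↔ (a = 0 ∧ b = 0) := by
  rw [zsm_isUnit_iff, hx]
  constructor
  · intro h
    have h2 := congrArg Multiplicative.toAdd h
    rw [toAdd_ofAdd, toAdd_one] at h2
    have h3 := congrArg Multiset.card h2
    simp only [Multiset.card_add, Multiset.card_replicate, Multiset.card_zero] at h3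
    omega
  · rintro ⟨rfl, rfl⟩
    simp

end Aux

/-- For `g` of order `n ≥ 3`, the atoms of `B({g,-g})` are exactly
`gⁿ`, `(-g)ⁿ` and `g·(-g)`. -/
theorem atoms_of_zeroSumMonoid_pair {G : Type*} [AddCommGroup G] (g : G) (n : ℕ)
    (hn : 3 ≤ n) (hg : addOrderOf g = n) :
    ∀ v : ↥(ZeroSumMonoid ({g, -g} : Set G)), Irreducible v ↔
      ((v : Multiplicative (Multiset G)) = Multiplicative.ofAdd (Multiset.replicate n g) ∨
       (v : Multiplicative (Multiset G)) = Multiplicative.ofAdd (Multiset.replicate n (-g)) ∨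
       (v : Multiplicative (Multiset G)) = Multiplicative.ofAdd ({g, -g} : Multiset G)) := by
  classical
  have hn0 : 0 < n := by omega
  have hne : g ≠ -g := by
    intro h
    have h2 : 2 • g = 0 := by rw [two_nsmul]; nth_rewrite 2 [h]; rw [add_neg_cancel]
    have := addOrderOf_dvd_of_nsmul_eq_zero h2
    rw [hg] at this
    have := Nat.le_of_dvd (by norm_num) this
    omega
  have hpair : Multiset.replicate 1 g + Multiset.replicate 1 (-g) = ({g, -g} : Multiset G) := by
    simp [Multiset.replicate_one, Multiset.singleton_add]
  intro v
  obtain ⟨hmem, hsum⟩ := v.2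
  obtain ⟨a, b, hab⟩ := zsm_decomp (Multiplicative.toAdd (v : Multiplicative (Multiset G))) hmem
  rw [hab] at hsum
  have hdvd : (n : ℤ) ∣ (a : ℤ) - b := (zsm_sum_iff hg a b).1 hsum
  have hv : (v : Multiplicative (Multiset G)) =
      Multiplicative.ofAdd (Multiset.replicate a g + Multiset.replicate b (-g)) := by
    rw [← hab, ofAdd_toAdd]
  constructor
  · intro hirr
    have hnu : ¬ (a = 0 ∧ b = 0) := fun h => hirr.not_isUnit ((zsm_unit_iff' v a b hv).2 h)
    rcases Nat.eq_zero_or_pos a with ha | ha <;> rcases Nat.eq_zero_or_pos b with hb | hb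
    · exact absurd ⟨ha, hb⟩ hnu
    · -- a = 0, b > 0 : must be b = n
      subst ha
      have hnb : (n : ℤ) ∣ (b : ℤ) := by
        have := hdvd.neg_right
        simpa using this
      have hnb' : n ∣ b := by exact_mod_cast hnb
      have hble : n ≤ b := Nat.le_of_dvd hb hnb'
      obtain ⟨c, hc⟩ : ∃ c, b = n + c := ⟨b - n, by omega⟩
      have hcd : (n : ℤ) ∣ (0 : ℤ) - (c : ℤ) := by
        have heq : (0 : ℤ) - c = ((0:ℤ) - b) + n := by rw [hc]; push_cast; ring
        rw [heq]
        exact dvd_add hdvd (dvd_refl _)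
      set x : ↥(ZeroSumMonoid ({g, -g} : Set G)) := ⟨_, zsm_mem hg 0 n (by simp)⟩ with hxdef
      set y : ↥(ZeroSumMonoid ({g, -g} : Set G)) := ⟨_, zsm_mem hg 0 c hcd⟩ with hydef
      have hxy : v = x * y := by
        apply Subtype.ext
        show (v : Multiplicative (Multiset G)) = _
        rw [hv]
        show _ = Multiplicative.ofAdd _ * Multiplicative.ofAdd _
        rw [← ofAdd_add]
        exact congrArg Multiplicative.ofAdd (by
          rw [hc, Multiset.replicate_add]
          simp [add_assoc, add_comm, add_left_comm])
      rcases hirr.isUnit_or_isUnit hxy with hu | hu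
      · have := ((zsm_unit_iff' x 0 n rfl).1 hu).2
        omega
      · have hc0 := ((zsm_unit_iff' y 0 c rfl).1 hu).2
        right; left
        rw [hv]
        exact congrArg Multiplicative.ofAdd (by rw [hc, hc0]; simp)
    · -- b = 0, a > 0 : must be a = n
      subst hb
      have hnb : (n : ℤ) ∣ (a : ℤ) := by simpa using hdvd
      have hnb' : n ∣ a := by exact_mod_cast hnb
      have hble : n ≤ a := Nat.le_of_dvd ha hnb'
      obtain ⟨c, hc⟩ : ∃ c, a = n + c := ⟨a - n, by omega⟩
      have hcd : (n : ℤ) ∣ (c : ℤ) - (0 : ℤ) := by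
        have heq : (c:ℤ) - 0 = ((a:ℤ) - 0) - n := by rw [hc]; push_cast; ring
        rw [heq]
        exact dvd_sub hdvd (dvd_refl _)
      set x : ↥(ZeroSumMonoid ({g, -g} : Set G)) := ⟨_, zsm_mem hg n 0 (by simp)⟩ with hxdef
      set y : ↥(ZeroSumMonoid ({g, -g} : Set G)) := ⟨_, zsm_mem hg c 0 hcd⟩ with hydef
      have hxy : v = x * y := by
        apply Subtype.ext
        show (v : Multiplicative (Multiset G)) = _
        rw [hv]
        show _ = Multiplicative.ofAdd _ * Multiplicative.ofAdd _
        rw [← ofAdd_add]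
        exact congrArg Multiplicative.ofAdd (by
          rw [hc, Multiset.replicate_add]
          simp [add_assoc, add_comm, add_left_comm])
      rcases hirr.isUnit_or_isUnit hxy with hu | hu
      · have := ((zsm_unit_iff' x n 0 rfl).1 hu).1
        omega
      · have hc0 := ((zsm_unit_iff' y c 0 rfl).1 hu).1
        left
        rw [hv]
        exact congrArg Multiplicative.ofAdd (by rw [hc, hc0]; simp)
    · -- a > 0, b > 0
      obtain ⟨a', rfl⟩ : ∃ a', a = a' + 1 := ⟨a - 1, by omega⟩
      obtain ⟨b', rfl⟩ : ∃ b', b = b' + 1 := ⟨b - 1, by omega⟩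
      have hcd : (n : ℤ) ∣ (a' : ℤ) - (b' : ℤ) := by
        have heq : (a':ℤ) - b' = ((a'+1:ℕ):ℤ) - ((b'+1:ℕ):ℤ) := by push_cast; ring
        rw [heq]; exact hdvd
      set x : ↥(ZeroSumMonoid ({g, -g} : Set G)) := ⟨_, zsm_mem hg 1 1 (by simp)⟩ with hxdef
      set y : ↥(ZeroSumMonoid ({g, -g} : Set G)) := ⟨_, zsm_mem hg a' b' hcd⟩ with hydef
      have hxy : v = x * y := by
        apply Subtype.ext
        show (v : Multiplicative (Multiset G)) = _
        rw [hv]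
        show _ = Multiplicative.ofAdd _ * Multiplicative.ofAdd _
        rw [← ofAdd_add]
        exact congrArg Multiplicative.ofAdd (by
          rw [show a' + 1 = 1 + a' by omega, show b' + 1 = 1 + b' by omega,
            Multiset.replicate_add, Multiset.replicate_add]
          simp [add_assoc, add_comm, add_left_comm])
      rcases hirr.isUnit_or_isUnit hxy with hu | hu
      · have := ((zsm_unit_iff' x 1 1 rfl).1 hu).1
        omega
      · obtain ⟨ha0, hb0⟩ := (zsm_unit_iff' y a' b' rfl).1 hu
        right; right
        rw [hv]
        exact congrArg Multiplicative.ofAdd (by rw [ha0, hb0, ← hpair])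
  · intro h
    constructor
    · -- not a unit
      intro hu
      have h1 := (zsm_isUnit_iff v).1 hu
      rcases h with h | h | h <;> rw [h1] at h <;>
        have h2 := congrArg Multiplicative.toAdd h <;>
        rw [toAdd_one, toAdd_ofAdd] at h2 <;>
        have h3 := congrArg Multiset.card h2.symm <;>
        simp at h3 <;> omega
    · intro x y hxy
      obtain ⟨hmx, hsx⟩ := x.2
      obtain ⟨hmy, hsy⟩ := y.2
      obtain ⟨a₁, b₁, hab₁⟩ :=
        zsm_decomp (Multiplicative.toAdd (x : Multiplicative (Multiset G))) hmx
      obtain ⟨a₂, b₂, hab₂⟩ :=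
        zsm_decomp (Multiplicative.toAdd (y : Multiplicative (Multiset G))) hmy
      rw [hab₁] at hsx
      rw [hab₂] at hsy
      have hd₁ : (n : ℤ) ∣ (a₁ : ℤ) - b₁ := (zsm_sum_iff hg a₁ b₁).1 hsx
      have hxv : (x : Multiplicative (Multiset G)) =
          Multiplicative.ofAdd (Multiset.replicate a₁ g + Multiset.replicate b₁ (-g)) := by
        rw [← hab₁, ofAdd_toAdd]
      have hyv : (y : Multiplicative (Multiset G)) =
          Multiplicative.ofAdd (Multiset.replicate a₂ g + Multiset.replicate b₂ (-g)) := by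
        rw [← hab₂, ofAdd_toAdd]
      have hsum' : Multiplicative.toAdd (v : Multiplicative (Multiset G)) =
          Multiset.replicate (a₁ + a₂) g + Multiset.replicate (b₁ + b₂) (-g) := by
        have hc : (v : Multiplicative (Multiset G)) =
            (x : Multiplicative (Multiset G)) * (y : Multiplicative (Multiset G)) :=
          congrArg Subtype.val hxy
        have h2 := congrArg Multiplicative.toAdd hc
        rw [toAdd_mul, hab₁, hab₂] at h2
        rw [h2, Multiset.replicate_add, Multiset.replicate_add]
        simp [add_assoc, add_comm, add_left_comm]
      have key : ∀ A B : ℕ, Multiplicative.toAdd (v : Multiplicative (Multiset G)) =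
          Multiset.replicate A g + Multiset.replicate B (-g) → a₁ + a₂ = A ∧ b₁ + b₂ = B := by
        intro A B hAB
        rw [hsum'] at hAB
        constructor
        · have := congrArg (Multiset.count g) hAB
          rwa [zsm_count₁ hne, zsm_count₁ hne] at this
        · have := congrArg (Multiset.count (-g)) hAB
          rwa [zsm_count₂ hne, zsm_count₂ hne] at this
      rcases h with h | h | h
      · -- v = g^n
        obtain ⟨hA, hB⟩ := key n 0 (by rw [h]; simp)
        have hb₁ : b₁ = 0 := by omega
        have hb₂ : b₂ = 0 := by omega
        have hna₁ : n ∣ a₁ := by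
          have hz : (n:ℤ) ∣ (a₁:ℤ) := by rw [hb₁] at hd₁; simpa using hd₁
          exact_mod_cast hz
        rcases Nat.eq_zero_or_pos a₁ with h0 | h0
        · exact Or.inl ((zsm_unit_iff' x a₁ b₁ hxv).2 ⟨h0, hb₁⟩)
        · have : n ≤ a₁ := Nat.le_of_dvd h0 hna₁
          exact Or.inr ((zsm_unit_iff' y a₂ b₂ hyv).2 ⟨by omega, hb₂⟩)
      · -- v = (-g)^n
        obtain ⟨hA, hB⟩ := key 0 n (by rw [h]; simp)
        have ha₁ : a₁ = 0 := by omega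
        have ha₂ : a₂ = 0 := by omega
        have hnb₁ : n ∣ b₁ := by
          have hz : (n:ℤ) ∣ (b₁:ℤ) := by
            rw [ha₁] at hd₁
            have := hd₁.neg_right
            simpa using this
          exact_mod_cast hz
        rcases Nat.eq_zero_or_pos b₁ with h0 | h0
        · exact Or.inl ((zsm_unit_iff' x a₁ b₁ hxv).2 ⟨ha₁, h0⟩)
        · have : n ≤ b₁ := Nat.le_of_dvd h0 hnb₁
          exact Or.inr ((zsm_unit_iff' y a₂ b₂ hyv).2 ⟨ha₂, by omega⟩)
      · -- v = g(-g)
        obtain ⟨hA, hB⟩ := key 1 1 (by rw [h, ← hpair]; simp)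
        have heq : a₁ = b₁ := by
          have h0 : (a₁ : ℤ) - b₁ = 0 := by
            apply Int.eq_zero_of_abs_lt_dvd hd₁
            rw [abs_sub_lt_iff]
            constructor <;> push_cast <;> omega
          omega
        rcases Nat.eq_zero_or_pos a₁ with h0 | h0
        · exact Or.inl ((zsm_unit_iff' x a₁ b₁ hxv).2 ⟨h0, by omega⟩)
        · exact Or.inr ((zsm_unit_iff' y a₂ b₂ hyv).2 ⟨by omega, by omega⟩)
end

section
/- Let d ∈ ℕ be a positive integer, G an abelian group containing an element g of order d+2, and H = B({g,−g}) the monoid of zero-sum sequences over {g,−g}. Then the set of distances Δ(H) equals {d}. -/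
universe u

/-!
Write `n = d + 2` for the order of `g`. Every element of `B({g, -g})` is `g^a (-g)^b` with
`a ≡ b [MOD n]`, and its atoms are `g^n`, `(-g)^n` and `g (-g)`. A factorization of `g^a (-g)^b`
is therefore a decomposition `(a, b) = k (n, 0) + l (0, n) + m (1, 1)`, of length `k + l + m`.
Two such decompositions differ by trading `j` copies of `g^n (-g)^n` for `(g (-g))^(j n)`, which
changes the length by `j (n - 2) = j d`. So every set of lengths is an arithmetic progression
with difference `d`, and `g^n (-g)^n` has the two lengths `2` and `n`.
-/

open Multiset

theorem deltaSet_eq_singleton {M : Type*} [CommMonoid M] {d : ℕ} (hd : 0 < d)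
    (hstep : ∀ (a : M) (k ℓ : ℕ), k ∈ LengthsOf a → ℓ ∈ LengthsOf a → k < ℓ →
      d ∣ ℓ - k ∧ k + d ∈ LengthsOf a)
    (hgap : ∃ (a : M) (k : ℕ), k ∈ LengthsOf a ∧ k + d ∈ LengthsOf a) :
    DeltaSet M = {d} := by
  ext e
  rw [Set.mem_singleton_iff]
  constructor
  · rintro ⟨he, a, k, hk, hke, hnone⟩
    obtain ⟨hdvd, hkd⟩ := hstep a k (k + e) hk hke (by omega)
    have hde : d ≤ e := Nat.le_of_dvd he (by simpa using hdvd)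
    by_contra hne
    exact hnone (k + d) hkd ⟨by omega, by omega⟩
  · rintro rfl
    obtain ⟨a, k, hk, hkd⟩ := hgap
    refine ⟨hd, a, k, hk, hkd, fun ℓ hℓ ⟨hkℓ, hℓk⟩ => ?_⟩
    have := Nat.le_of_dvd (by omega) (hstep a k ℓ hk hℓ hkℓ).1
    omega

theorem Multiset.exists_eq_replicate_add_replicate_add_replicate {α : Type*} {u v w : α}
    (s : Multiset α) (hs : ∀ x ∈ s, x = u ∨ x = v ∨ x = w) :
    ∃ k l m : ℕ, s = replicate k u + replicate l v + replicate m w := by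
  induction s using Multiset.induction with
  | empty => exact ⟨0, 0, 0, by simp⟩
  | cons x s ih =>
    obtain ⟨k, l, m, rfl⟩ := ih fun y hy => hs y (mem_cons_of_mem hy)
    rcases hs x (mem_cons_self x _) with rfl | rfl | rfl
    · exact ⟨k + 1, l, m, by simp [replicate_succ]⟩
    · exact ⟨k, l + 1, m, by simp [replicate_succ]⟩
    · exact ⟨k, l, m + 1, by simp [replicate_succ]⟩

/-- The lengths `k + l + m` of the decompositions `(a, b) = k (n, 0) + l (0, n) + m (1, 1)`. -/
def pairLengths (n a b : ℕ) : Set ℕ :=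
  {L | ∃ k l m : ℕ, a = k * n + m ∧ b = l * n + m ∧ L = k + l + m}

theorem exists_eq_add_of_decomp_eq {n k l m k' l' m' : ℕ} (hn : 0 < n)
    (ha : k * n + m = k' * n + m') (hb : l * n + m = l' * n + m') (hm : m ≤ m') :
    ∃ j, k = k' + j ∧ l = l' + j ∧ m' = m + j * n := by
  have hk : k' ≤ k := Nat.le_of_mul_le_mul_right (by omega) hn
  obtain ⟨j, rfl⟩ := Nat.exists_eq_add_of_le hk
  refine ⟨j, rfl, Nat.eq_of_mul_eq_mul_right hn ?_, by linarith⟩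
  linarith

theorem dvd_sub_and_add_mem_pairLengths {d a b k ℓ : ℕ} (hk : k ∈ pairLengths (d + 2) a b)
    (hℓ : ℓ ∈ pairLengths (d + 2) a b) (hkℓ : k < ℓ) :
    d ∣ ℓ - k ∧ k + d ∈ pairLengths (d + 2) a b := by
  obtain ⟨k₁, l₁, m₁, ha₁, hb₁, rfl⟩ := hk
  obtain ⟨k₂, l₂, m₂, ha₂, hb₂, rfl⟩ := hℓ
  rcases le_total m₁ m₂ with hm | hm
  · obtain ⟨j, rfl, rfl, rfl⟩ := exists_eq_add_of_decomp_eq (by omega) (ha₁ ▸ ha₂)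
      (hb₁ ▸ hb₂) hm
    obtain ⟨i, rfl⟩ : ∃ i, j = i + 1 := Nat.exists_eq_succ_of_ne_zero (by rintro rfl; omega)
    have hjd : (i + 1) * (d + 2) = d * (i + 1) + 2 * (i + 1) := by ring
    exact ⟨⟨i + 1, by omega⟩, k₂ + i, l₂ + i, m₁ + (d + 2), by rw [ha₁]; ring,
      by rw [hb₁]; ring, by omega⟩
  · obtain ⟨j, rfl, rfl, rfl⟩ := exists_eq_add_of_decomp_eq (by omega) (ha₂ ▸ ha₁)
      (hb₂ ▸ hb₁) hm
    have hjd : j * (d + 2) = j * d + 2 * j := by ring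
    omega

namespace ZeroSumMonoid

variable {G : Type*} [AddCommGroup G] {G₀ : Set G}

instance : Subsingleton (ZeroSumMonoid G₀)ˣ :=
  (Units.map_injective (f := (ZeroSumMonoid G₀).subtype) Subtype.val_injective).subsingleton

theorem card_mul (x y : ZeroSumMonoid G₀) :
    card (Multiplicative.toAdd ((x * y : ZeroSumMonoid G₀) : Multiplicative (Multiset G))) =
      card (Multiplicative.toAdd (x : Multiplicative (Multiset G))) +
        card (Multiplicative.toAdd (y : Multiplicative (Multiset G))) := by
  simp

theorem eq_one_iff_card_eq_zero (x : ZeroSumMonoid G₀) :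
    x = 1 ↔ card (Multiplicative.toAdd (x : Multiplicative (Multiset G))) = 0 := by
  rw [card_eq_zero, ← Subtype.coe_inj]
  rfl

theorem card_ne_one (h₀ : (0 : G) ∉ G₀) (x : ZeroSumMonoid G₀) :
    card (Multiplicative.toAdd (x : Multiplicative (Multiset G))) ≠ 1 := by
  intro hx
  obtain ⟨c, hc⟩ := card_eq_one.1 hx
  have hsum := x.2.2
  have hmem := x.2.1 c (by simp [hc])
  simp only [hc, sum_singleton] at hsum
  exact h₀ (hsum ▸ hmem)

theorem irreducible_of_card_eq_two (h₀ : (0 : G) ∉ G₀) {x : ZeroSumMonoid G₀}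
    (hx : card (Multiplicative.toAdd (x : Multiplicative (Multiset G))) = 2) :
    Irreducible x := by
  refine ⟨by simp [isUnit_iff_eq_one, eq_one_iff_card_eq_zero, hx], fun y z hyz => ?_⟩
  simp only [isUnit_iff_eq_one, eq_one_iff_card_eq_zero]
  have hcard := card_mul y z
  rw [← hyz, hx] at hcard
  have := card_ne_one h₀ y
  have := card_ne_one h₀ z
  omega

theorem irreducible_of_eq_replicate_addOrderOf {h : G} (hh : 0 < addOrderOf h)
    {x : ZeroSumMonoid G₀}
    (hx : Multiplicative.toAdd (x : Multiplicative (Multiset G)) = replicate (addOrderOf h) h) :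
    Irreducible x := by
  refine ⟨by simpa [isUnit_iff_eq_one, eq_one_iff_card_eq_zero, hx] using hh.ne',
    fun y z hyz => ?_⟩
  simp only [isUnit_iff_eq_one, eq_one_iff_card_eq_zero]
  have hcard := card_mul y z
  rw [← hyz, hx, card_replicate] at hcard
  have hle : Multiplicative.toAdd (y : Multiplicative (Multiset G)) ≤
      replicate (addOrderOf h) h := by
    rw [← hx, hyz]
    exact le_add_right le_rfl
  obtain ⟨p, -, hy⟩ := le_replicate_iff.1 hle
  have hdvd : addOrderOf h ∣ p := addOrderOf_dvd_of_nsmul_eq_zero (by simpa [hy] using y.2.2)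
  rw [hy, card_replicate] at hcard ⊢
  rcases Nat.eq_zero_or_pos p with hp | hp
  · exact .inl hp
  · have := Nat.le_of_dvd hp hdvd
    omega

variable {g : G}

def pairElt (g : G) (a b : ℕ) : Multiplicative (Multiset G) :=
  Multiplicative.ofAdd (replicate a g + replicate b (-g))

theorem pairElt_mul (a b a' b' : ℕ) :
    pairElt g a b * pairElt g a' b' = pairElt g (a + a') (b + b') := by
  simp only [pairElt, ← ofAdd_add, replicate_add]
  abel_nf

theorem pairElt_pow (a b k : ℕ) : pairElt g a b ^ k = pairElt g (k * a) (k * b) := by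
  simp only [pairElt, ← ofAdd_nsmul, smul_add, nsmul_replicate]

theorem card_pairElt (a b : ℕ) : card (Multiplicative.toAdd (pairElt g a b)) = a + b := by
  simp [pairElt]

theorem pairElt_inj (hg : g ≠ -g) {a b a' b' : ℕ} :
    pairElt g a b = pairElt g a' b' ↔ a = a' ∧ b = b' := by
  classical
  refine ⟨fun h => ?_, fun ⟨rfl, rfl⟩ => rfl⟩
  have h' := congrArg Multiplicative.toAdd h
  simp only [pairElt, toAdd_ofAdd] at h'
  exact ⟨by simpa [count_replicate, hg, hg.symm] using congrArg (count g) h',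
    by simpa [count_replicate, hg, hg.symm] using congrArg (count (-g)) h'⟩

theorem pairElt_mem_iff {a b : ℕ} :
    pairElt g a b ∈ ZeroSumMonoid ({g, -g} : Set G) ↔ a ≡ b [MOD addOrderOf g] := by
  have hmem : ∀ x ∈ Multiplicative.toAdd (pairElt g a b), x ∈ ({g, -g} : Set G) := by
    intro x hx
    rw [pairElt, toAdd_ofAdd, mem_add] at hx
    rcases hx with h | h <;> simp [eq_of_mem_replicate h]
  change (∀ x ∈ _, _) ∧ _ ↔ _
  rw [and_iff_right hmem, ← nsmul_eq_nsmul_iff_modEq]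
  simp [pairElt, add_neg_eq_zero]

theorem exists_pairElt_eq (x : ZeroSumMonoid ({g, -g} : Set G)) :
    ∃ a b, pairElt g a b = x := by
  classical
  set s := Multiplicative.toAdd (x : Multiplicative (Multiset G))
  have hneg : ∀ y ∈ s.filter (· ≠ g), y = -g := fun y hy => by
    obtain ⟨hys, hyg⟩ := mem_filter.1 hy
    simpa [hyg] using x.2.1 y hys
  refine ⟨count g s, card (s.filter (· ≠ g)), ?_⟩
  rw [pairElt, ← eq_replicate_card.2 hneg, ← filter_eq', filter_add_not]
  rfl

theorem mk_pairElt_dvd {a b p q : ℕ} (hab : pairElt g a b ∈ ZeroSumMonoid ({g, -g} : Set G))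
    (hpq : pairElt g p q ∈ ZeroSumMonoid ({g, -g} : Set G)) (hp : p ≤ a) (hq : q ≤ b) :
    (⟨pairElt g p q, hpq⟩ : ZeroSumMonoid ({g, -g} : Set G)) ∣ ⟨pairElt g a b, hab⟩ := by
  have hrest : pairElt g (a - p) (b - q) ∈ ZeroSumMonoid ({g, -g} : Set G) := by
    rw [pairElt_mem_iff] at hab hpq ⊢
    refine Nat.ModEq.add_right_cancel hpq ?_
    rwa [Nat.sub_add_cancel hp, Nat.sub_add_cancel hq]
  refine ⟨⟨_, hrest⟩, Subtype.ext ?_⟩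
  simp only [Submonoid.coe_mul, pairElt_mul, Nat.add_sub_cancel' hp, Nat.add_sub_cancel' hq]

variable (g) in
noncomputable def pairAtomPos : ZeroSumMonoid ({g, -g} : Set G) :=
  ⟨pairElt g (addOrderOf g) 0, pairElt_mem_iff.2 (Nat.modEq_zero_iff_dvd.2 dvd_rfl)⟩

variable (g) in
noncomputable def pairAtomNeg : ZeroSumMonoid ({g, -g} : Set G) :=
  ⟨pairElt g 0 (addOrderOf g), pairElt_mem_iff.2 (Nat.modEq_zero_iff_dvd.2 dvd_rfl).symm⟩

variable (g) in
noncomputable def pairAtomMixed : ZeroSumMonoid ({g, -g} : Set G) :=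
  ⟨pairElt g 1 1, pairElt_mem_iff.2 rfl⟩

theorem irreducible_pairAtomPos (hg : 0 < addOrderOf g) : Irreducible (pairAtomPos g) :=
  irreducible_of_eq_replicate_addOrderOf hg (by simp [pairAtomPos, pairElt])

theorem irreducible_pairAtomNeg (hg : 0 < addOrderOf g) : Irreducible (pairAtomNeg g) :=
  irreducible_of_eq_replicate_addOrderOf (h := -g) (by rwa [addOrderOf_neg])
    (by simp [pairAtomNeg, pairElt])

theorem irreducible_pairAtomMixed (hg : g ≠ 0) : Irreducible (pairAtomMixed g) :=
  irreducible_of_card_eq_two (by simpa [eq_comm] using hg) (card_pairElt 1 1)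

theorem exists_pairAtom_dvd {x : ZeroSumMonoid ({g, -g} : Set G)} (hx : x ≠ 1) :
    pairAtomPos g ∣ x ∨ pairAtomNeg g ∣ x ∨ pairAtomMixed g ∣ x := by
  obtain ⟨x, hmem⟩ := x
  obtain ⟨a, b, rfl⟩ := exists_pairElt_eq ⟨x, hmem⟩
  have hmod := pairElt_mem_iff.1 hmem
  have hab : a + b ≠ 0 := by rwa [Ne, eq_one_iff_card_eq_zero, card_pairElt] at hx
  rcases Nat.eq_zero_or_pos a with rfl | ha
  · have hb : addOrderOf g ≤ b := Nat.le_of_dvd (by omega) (Nat.modEq_zero_iff_dvd.1 hmod.symm)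
    exact .inr (.inl (mk_pairElt_dvd hmem _ le_rfl hb))
  rcases Nat.eq_zero_or_pos b with rfl | hb
  · exact .inl (mk_pairElt_dvd hmem _ (Nat.le_of_dvd ha (Nat.modEq_zero_iff_dvd.1 hmod)) le_rfl)
  · exact .inr (.inr (mk_pairElt_dvd hmem _ ha hb))

theorem irreducible_iff_eq_pairAtom (hg : 2 < addOrderOf g)
    {x : ZeroSumMonoid ({g, -g} : Set G)} :
    Irreducible x ↔ x = pairAtomPos g ∨ x = pairAtomNeg g ∨ x = pairAtomMixed g := by
  have hg₀ : g ≠ 0 := by rintro rfl; simp at hg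
  have hpos := irreducible_pairAtomPos (g := g) (by omega)
  have hneg := irreducible_pairAtomNeg (g := g) (by omega)
  have hmix := irreducible_pairAtomMixed hg₀
  refine ⟨fun hx => ?_, by rintro (rfl | rfl | rfl) <;> assumption⟩
  have eq_of_dvd {y} (hy : Irreducible y) (h : y ∣ x) : x = y :=
    (associated_iff_eq.1 (hy.associated_of_dvd hx h)).symm
  rcases exists_pairAtom_dvd hx.ne_one with h | h | h
  exacts [.inl (eq_of_dvd hpos h), .inr (.inl (eq_of_dvd hneg h)), .inr (.inr (eq_of_dvd hmix h))]

theorem coe_prod_pairAtoms (k l m : ℕ) :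
    (((replicate k (pairAtomPos g) + replicate l (pairAtomNeg g) +
        replicate m (pairAtomMixed g)).prod : ZeroSumMonoid ({g, -g} : Set G)) :
        Multiplicative (Multiset G)) =
      pairElt g (k * addOrderOf g + m) (l * addOrderOf g + m) := by
  simp only [prod_add, prod_replicate, Submonoid.coe_mul, SubmonoidClass.coe_pow, pairAtomPos,
    pairAtomNeg, pairAtomMixed, pairElt_pow, pairElt_mul]
  congr 1 <;> ring

theorem lengthsOf_eq_pairLengths (hg : 2 < addOrderOf g) {a b : ℕ}
    (x : ZeroSumMonoid ({g, -g} : Set G))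
    (hx : (x : Multiplicative (Multiset G)) = pairElt g a b) :
    LengthsOf x = pairLengths (addOrderOf g) a b := by
  have hgg : g ≠ -g := fun h => by
    have h₂ : 2 • g = 0 := by rw [two_nsmul]; nth_rw 2 [h]; exact add_neg_cancel g
    have := addOrderOf_le_of_nsmul_eq_zero two_pos h₂
    omega
  ext L
  constructor
  · rintro ⟨s, rfl, hs, rfl⟩
    obtain ⟨k, l, m, rfl⟩ := exists_eq_replicate_add_replicate_add_replicate s
      fun y hy => (irreducible_iff_eq_pairAtom hg).1 (hs y hy)
    rw [coe_prod_pairAtoms, pairElt_inj hgg] at hx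
    exact ⟨k, l, m, hx.1.symm, hx.2.symm, by simp⟩
  · rintro ⟨k, l, m, rfl, rfl, rfl⟩
    refine ⟨replicate k (pairAtomPos g) + replicate l (pairAtomNeg g) +
      replicate m (pairAtomMixed g), by simp, fun y hy => ?_,
      Subtype.ext (by rw [coe_prod_pairAtoms, hx])⟩
    simp only [mem_add, mem_replicate] at hy
    rw [irreducible_iff_eq_pairAtom hg]
    tauto

end ZeroSumMonoid

open ZeroSumMonoid in
/-- If `g` has order `d+2`, then the set of distances of `B({g,-g})` is `{d}`. -/
theorem deltaSet_zeroSumMonoid_pair {G : Type*} [AddCommGroup G] (g : G) (d : ℕ)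
    (hd : 0 < d) (hg : addOrderOf g = d + 2) :
    DeltaSet ↥(ZeroSumMonoid ({g, -g} : Set G)) = {d} := by
  have hg₂ : 2 < addOrderOf g := by omega
  have hlengths (x : ZeroSumMonoid ({g, -g} : Set G)) :
      ∃ a b, LengthsOf x = pairLengths (d + 2) a b := by
    obtain ⟨a, b, hab⟩ := exists_pairElt_eq x
    exact ⟨a, b, hg ▸ lengthsOf_eq_pairLengths hg₂ x hab.symm⟩
  refine deltaSet_eq_singleton hd (fun x k ℓ hk hℓ hkℓ => ?_)
    ⟨pairAtomPos g * pairAtomNeg g, 2, ?_⟩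
  · obtain ⟨a, b, hx⟩ := hlengths x
    rw [hx] at hk hℓ ⊢
    exact dvd_sub_and_add_mem_pairLengths hk hℓ hkℓ
  · rw [lengthsOf_eq_pairLengths hg₂ _ (pairElt_mul _ _ _ _), hg]
    exact ⟨⟨1, 1, 0, by ring, by ring, rfl⟩, 0, 0, d + 2, by ring, by ring, by ring⟩
end

section
/- Let G be an abelian group, g ∈ G of order d+2 for some d ∈ ℕ, and let u₁ be any atom of a reduced atomic monoid H₁. In the product monoid H₁ × B({g,−g}), the set of lengths of the element u₁·(gᵈ⁺²)·((−g)ᵈ⁺²) equals {3, 3+d}. -/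
universe u

/-!
An atom of `H₁ × B` is an atom of one factor paired with a unit of the other, so a
factorization of `(u₁, b)` is `u₁` (times units) together with a factorization of `b`: its
lengths are those of `b` shifted by one. Since `g ≠ -g`, every element of `B = B({g, -g})` is
`gᵐ(-g)ⁿ` for a unique pair with `m ≡ n [MOD d + 2]`, and the atoms of `B` are the minimal
nonzero such pairs `(d + 2, 0)`, `(0, d + 2)` and `(1, 1)`. A factorization of `b` with `p`, `q`,
`r` copies of these atoms forces `p (d + 2) + r = q (d + 2) + r = d + 2`, so `(p, q, r)` is
`(1, 1, 0)` or `(0, 0, d + 2)`.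
-/

open Multiset

section Product

variable {M N : Type*} [CommMonoid M] [CommMonoid N]

theorem Prod.irreducible_mk_iff_of_isUnit_right {x : M} {y : N} (hy : IsUnit y) :
    Irreducible (x, y) ↔ Irreducible x := by
  constructor
  · intro h
    refine ⟨fun hx ↦ h.not_isUnit (Prod.isUnit_iff.2 ⟨hx, hy⟩), fun a b hab ↦ ?_⟩
    have hsplit : (x, y) = (a, y) * (b, 1) := by simp [hab]
    exact (h.isUnit_or_isUnit hsplit).imp (fun h ↦ (Prod.isUnit_iff.1 h).1)
      (fun h ↦ (Prod.isUnit_iff.1 h).1)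
  · intro h
    refine ⟨fun hxy ↦ h.not_isUnit (Prod.isUnit_iff.1 hxy).1, fun a b hab ↦ ?_⟩
    have hy' : IsUnit (a.2 * b.2) := by rwa [← Prod.snd_mul, ← hab]
    exact (h.isUnit_or_isUnit (congrArg Prod.fst hab)).imp
      (fun ha ↦ Prod.isUnit_iff.2 ⟨ha, isUnit_of_mul_isUnit_left hy'⟩)
      (fun hb ↦ Prod.isUnit_iff.2 ⟨hb, isUnit_of_mul_isUnit_right hy'⟩)

theorem Prod.irreducible_mk_iff_of_isUnit_left {x : M} {y : N} (hx : IsUnit x) :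
    Irreducible (x, y) ↔ Irreducible y := by
  rw [← Prod.irreducible_mk_iff_of_isUnit_right (x := y) hx,
    ← MulEquiv.irreducible_iff (MulEquiv.prodComm : N × M ≃* M × N)]
  rfl

theorem Prod.irreducible_iff {p : M × N} :
    Irreducible p ↔ Irreducible p.1 ∧ IsUnit p.2 ∨ IsUnit p.1 ∧ Irreducible p.2 := by
  constructor
  · intro h
    rcases of_irreducible_mul (show Irreducible ((p.1, 1) * (1, p.2)) by simpa using h) with h1 | h2
    · have hp1 : IsUnit p.1 := (Prod.isUnit_iff.1 h1).1
      exact Or.inr ⟨hp1, (Prod.irreducible_mk_iff_of_isUnit_left hp1).1 h⟩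
    · have hp2 : IsUnit p.2 := (Prod.isUnit_iff.1 h2).2
      exact Or.inl ⟨(Prod.irreducible_mk_iff_of_isUnit_right hp2).1 h, hp2⟩
  · rintro (⟨h, hu⟩ | ⟨hu, h⟩)
    · exact (Prod.irreducible_mk_iff_of_isUnit_right hu).2 h
    · exact (Prod.irreducible_mk_iff_of_isUnit_left hu).2 h

theorem Multiset.card_eq_one_of_irreducible_prod {s : Multiset M} (hs : ∀ x ∈ s, Irreducible x)
    (h : Irreducible s.prod) : card s = 1 := by
  induction s using Multiset.induction_on with
  | empty => exact absurd h (by simp)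
  | cons a t _ =>
    rw [prod_cons, irreducible_mul_iff] at h
    rcases h with ⟨_, ht⟩ | ⟨_, ha⟩
    · rw [IsUnit.multisetProd_iff] at ht
      have : t = 0 := eq_zero_of_forall_notMem fun x hx ↦
        (hs x (mem_cons_of_mem hx)).not_isUnit (ht x hx)
      simp [this]
    · exact absurd ha (hs a (mem_cons_self a t)).not_isUnit

theorem add_one_mem_lengthsOf_prod_mk {u : M} (hu : Irreducible u) {b : N} {n : ℕ}
    (hn : n ∈ LengthsOf b) : n + 1 ∈ LengthsOf (u, b) := by
  obtain ⟨t, rfl, ht, rfl⟩ := hn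
  refine ⟨(u, 1) ::ₘ t.map (MonoidHom.inr M N), by simp, ?_, ?_⟩
  · simp only [mem_cons, mem_map, MonoidHom.inr_apply]
    rintro p (rfl | ⟨y, hy, rfl⟩)
    · exact (Prod.irreducible_mk_iff_of_isUnit_right isUnit_one).2 hu
    · exact (Prod.irreducible_mk_iff_of_isUnit_left isUnit_one).2 (ht y hy)
  · rw [prod_cons, ← map_multiset_prod, MonoidHom.inr_apply, Prod.mk_mul_mk, mul_one, one_mul]

theorem exists_add_one_eq_of_mem_lengthsOf_prod_mk [Subsingleton Nˣ] {u : M} (hu : Irreducible u)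
    {b : N} {n : ℕ} (hn : n ∈ LengthsOf (u, b)) : ∃ k ∈ LengthsOf b, k + 1 = n := by
  classical
  obtain ⟨s, rfl, hs, hprod⟩ := hn
  set A := s.filter (fun p ↦ IsUnit p.2)
  set B := s.filter (fun p ↦ ¬IsUnit p.2)
  have hA : ∀ p ∈ A, Irreducible p.1 ∧ IsUnit p.2 := fun p hp ↦
    (Prod.irreducible_iff.1 (hs p (mem_filter.1 hp).1)).resolve_right
      fun h ↦ h.2.not_isUnit (mem_filter.1 hp).2
  have hB : ∀ p ∈ B, IsUnit p.1 ∧ Irreducible p.2 := fun p hp ↦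
    (Prod.irreducible_iff.1 (hs p (mem_filter.1 hp).1)).resolve_left
      fun h ↦ (mem_filter.1 hp).2 h.2
  have hsAB : s = A + B := (filter_add_not _ s).symm
  have hfst : (A.map Prod.fst).prod * (B.map Prod.fst).prod = u := by
    rw [← prod_add, ← map_add, ← hsAB, ← MonoidHom.coe_fst, ← map_multiset_prod, hprod]
    rfl
  have hsnd : (A.map Prod.snd).prod * (B.map Prod.snd).prod = b := by
    rw [← prod_add, ← map_add, ← hsAB, ← MonoidHom.coe_snd, ← map_multiset_prod, hprod]
    rfl
  have hBfst : IsUnit (B.map Prod.fst).prod :=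
    IsUnit.multisetProd_iff.2 (forall_mem_map_iff.2 fun p hp ↦ (hB p hp).1)
  have hAsnd : (A.map Prod.snd).prod = 1 :=
    isUnit_iff_eq_one.1 (IsUnit.multisetProd_iff.2 (forall_mem_map_iff.2 fun p hp ↦ (hA p hp).2))
  have hcardA : card A = 1 := by
    rw [← card_map Prod.fst]
    refine card_eq_one_of_irreducible_prod (forall_mem_map_iff.2 fun p hp ↦ (hA p hp).1) ?_
    rwa [← irreducible_mul_isUnit hBfst, hfst]
  refine ⟨card B, ⟨B.map Prod.snd, card_map _ _, forall_mem_map_iff.2 fun p hp ↦ (hB p hp).2,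
    ?_⟩, ?_⟩
  · rwa [hAsnd, one_mul] at hsnd
  · rw [hsAB, card_add, hcardA, add_comm]

theorem lengthsOf_prod_mk_of_irreducible [Subsingleton Nˣ] {u : M} (hu : Irreducible u) (b : N) :
    LengthsOf (u, b) = (· + 1) '' LengthsOf b := by
  ext n
  constructor
  · exact exists_add_one_eq_of_mem_lengthsOf_prod_mk hu
  · rintro ⟨k, hk, rfl⟩
    exact add_one_mem_lengthsOf_prod_mk hu hk

end Product

theorem Multiset.exists_prod_eq_pow_mul_pow_mul_pow {M : Type*} [CommMonoid M] {x y z : M}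
    {s : Multiset M} (hs : ∀ w ∈ s, w = x ∨ w = y ∨ w = z) :
    ∃ a b c, s.prod = x ^ a * y ^ b * z ^ c ∧ card s = a + b + c := by
  induction s using Multiset.induction_on with
  | empty => exact ⟨0, 0, 0, by simp⟩
  | cons w t ih =>
    obtain ⟨a, b, c, hprod, hcard⟩ := ih fun v hv ↦ hs v (mem_cons_of_mem hv)
    rw [prod_cons, card_cons, hprod, hcard]
    rcases hs w (mem_cons_self w t) with rfl | rfl | rfl
    · exact ⟨a + 1, b, c, by rw [pow_succ]; ac_rfl, by omega⟩
    · exact ⟨a, b + 1, c, by rw [pow_succ]; ac_rfl, by omega⟩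
    · exact ⟨a, b, c + 1, by rw [pow_succ]; ac_rfl, by omega⟩

theorem Nat.minimal_modEq_pair_iff {e m n : ℕ} (he : 2 ≤ e) (hmn : m ≡ n [MOD e]) :
    ((m ≠ 0 ∨ n ≠ 0) ∧
      ∀ m' ≤ m, ∀ n' ≤ n, m' ≡ n' [MOD e] → m' = 0 ∧ n' = 0 ∨ m' = m ∧ n' = n) ↔
      m = e ∧ n = 0 ∨ m = 0 ∧ n = e ∨ m = 1 ∧ n = 1 := by
  have hzero : e ≡ 0 [MOD e] := Nat.modEq_zero_iff_dvd.2 dvd_rfl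
  have hsmall : ∀ {a b}, a < e → b < e → a ≡ b [MOD e] → a = b := fun ha hb h ↦ by
    rwa [Nat.ModEq, Nat.mod_eq_of_lt ha, Nat.mod_eq_of_lt hb] at h
  constructor
  · rintro ⟨hne, hmin⟩
    rcases Nat.eq_zero_or_pos n with rfl | hn
    · have hle : e ≤ m := Nat.le_of_dvd (by omega) (Nat.modEq_zero_iff_dvd.1 hmn)
      have := hmin e hle 0 le_rfl hzero
      omega
    rcases Nat.eq_zero_or_pos m with rfl | hm
    · have hle : e ≤ n := Nat.le_of_dvd hn (Nat.modEq_zero_iff_dvd.1 hmn.symm)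
      have := hmin 0 le_rfl e hle hzero.symm
      omega
    · have := hmin 1 hm 1 hn rfl
      omega
  · rintro (⟨rfl, rfl⟩ | ⟨rfl, rfl⟩ | ⟨rfl, rfl⟩) <;>
      refine ⟨by omega, fun m' hm' n' hn' h ↦ ?_⟩
    · obtain rfl : n' = 0 := by omega
      rcases hm'.lt_or_eq with hlt | rfl
      · exact Or.inl ⟨hsmall hlt (by omega) h, rfl⟩
      · exact Or.inr ⟨rfl, rfl⟩
    · obtain rfl : m' = 0 := by omega
      rcases hn'.lt_or_eq with hlt | rfl
      · exact Or.inl ⟨rfl, hsmall hlt (by omega) h.symm⟩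
      · exact Or.inr ⟨rfl, rfl⟩
    · have := hsmall (by omega) (by omega) h
      omega

theorem Nat.eq_two_or_eq_of_mul_add_eq {e a b c : ℕ} (he : 0 < e) (ha : a * e + c = e)
    (hb : b * e + c = e) : a + b + c = 2 ∨ a + b + c = e := by
  rcases Nat.eq_zero_or_pos a with rfl | ha0
  · have : b * e = 0 := by omega
    have : b = 0 := by simpa [he.ne'] using this
    omega
  · have hae : a * e = e := le_antisymm (by omega) (Nat.le_mul_of_pos_left e ha0)
    have ha1 : a = 1 := by simpa [he.ne'] using hae
    have hb1 : b * e = e := by omega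
    have : b = 1 := by simpa [he.ne'] using hb1
    omega

theorem ne_neg_self_of_two_lt_addOrderOf {G : Type*} [AddGroup G] {g : G}
    (hg : 2 < addOrderOf g) : g ≠ -g := fun h ↦ by
  have h2 : 2 • g = 0 := by rw [two_nsmul]; nth_rw 2 [h]; exact add_neg_cancel g
  have := Nat.le_of_dvd two_pos (addOrderOf_dvd_of_nsmul_eq_zero h2)
  omega

section PlusMinus

variable {G : Type*} [AddCommGroup G] {g : G} {m n m' n' : ℕ}

def plusMinusSeq (g : G) (m n : ℕ) : Multiplicative (Multiset G) :=
  Multiplicative.ofAdd (replicate m g + replicate n (-g))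

theorem plusMinusSeq_mul :
    plusMinusSeq g m n * plusMinusSeq g m' n' = plusMinusSeq g (m + m') (n + n') := by
  simp only [plusMinusSeq, ← ofAdd_add, replicate_add]
  abel_nf

theorem plusMinusSeq_zero_zero : plusMinusSeq g 0 0 = 1 := rfl

theorem plusMinusSeq_pow (k : ℕ) : plusMinusSeq g m n ^ k = plusMinusSeq g (k * m) (k * n) := by
  induction k with
  | zero => simp [plusMinusSeq_zero_zero]
  | succ k ih => rw [pow_succ, ih, plusMinusSeq_mul, add_one_mul, add_one_mul]

theorem plusMinusSeq_inj (hg : g ≠ -g) :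
    plusMinusSeq g m n = plusMinusSeq g m' n' ↔ m = m' ∧ n = n' := by
  classical
  have hcount : ∀ m n, (plusMinusSeq g m n).toAdd.count g = m ∧
      (plusMinusSeq g m n).toAdd.count (-g) = n := fun m n ↦ by
    simp [plusMinusSeq, count_replicate, hg, hg.symm]
  refine ⟨fun h ↦ ?_, by rintro ⟨rfl, rfl⟩; rfl⟩
  obtain ⟨h1, h2⟩ := hcount m n
  obtain ⟨h1', h2'⟩ := hcount m' n'
  rw [h] at h1 h2
  exact ⟨h1.symm.trans h1', h2.symm.trans h2'⟩

theorem plusMinusSeq_mem_zeroSumMonoid_iff :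
    plusMinusSeq g m n ∈ ZeroSumMonoid ({g, -g} : Set G) ↔ m ≡ n [MOD addOrderOf g] := by
  have hsupp : ∀ x ∈ (plusMinusSeq g m n).toAdd, x ∈ ({g, -g} : Set G) := by
    simp only [plusMinusSeq, toAdd_ofAdd, Multiset.mem_add]
    rintro x (hx | hx) <;> simp [eq_of_mem_replicate hx]
  change (_ ∧ _) ↔ _
  rw [and_iff_right hsupp]
  simp only [plusMinusSeq, toAdd_ofAdd, sum_add, sum_replicate, smul_neg,
    add_neg_eq_zero, nsmul_eq_nsmul_iff_modEq]

theorem exists_eq_plusMinusSeq {x : Multiplicative (Multiset G)}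
    (hx : x ∈ ZeroSumMonoid ({g, -g} : Set G)) : ∃ m n, x = plusMinusSeq g m n := by
  classical
  have hsplit := filter_add_not (· = g) x.toAdd
  refine ⟨x.toAdd.count g, card (x.toAdd.filter (· ≠ g)), ?_⟩
  rw [plusMinusSeq, ← filter_eq', ← eq_replicate_card.2 fun y hy ↦ ?_, hsplit, ofAdd_toAdd]
  obtain ⟨hy, hne⟩ := mem_filter.1 hy
  exact (hx.1 y hy).resolve_left hne

end PlusMinus

namespace ZeroSumMonoid

variable {G : Type*} [AddCommGroup G] {g : G} {m n : ℕ}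

theorem eq_one_iff_of_coe_eq (hg : g ≠ -g) {x : ZeroSumMonoid ({g, -g} : Set G)}
    (hx : (x : Multiplicative (Multiset G)) = plusMinusSeq g m n) : x = 1 ↔ m = 0 ∧ n = 0 := by
  rw [← Subtype.coe_inj, hx, OneMemClass.coe_one, ← plusMinusSeq_zero_zero, plusMinusSeq_inj hg]

theorem irreducible_iff_minimal_of_coe_eq (hg : g ≠ -g) {x : ZeroSumMonoid ({g, -g} : Set G)}
    (hx : (x : Multiplicative (Multiset G)) = plusMinusSeq g m n) :
    Irreducible x ↔ (m ≠ 0 ∨ n ≠ 0) ∧ ∀ m' ≤ m, ∀ n' ≤ n,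
      m' ≡ n' [MOD addOrderOf g] → m' = 0 ∧ n' = 0 ∨ m' = m ∧ n' = n := by
  have hmn := plusMinusSeq_mem_zeroSumMonoid_iff.1 (hx ▸ x.2)
  rw [irreducible_iff, isUnit_iff_eq_one, eq_one_iff_of_coe_eq hg hx, not_and_or]
  refine and_congr_right fun _ ↦ ⟨fun hirr m' hm' n' hn' h ↦ ?_, fun hmin y z hyz ↦ ?_⟩
  · have hcompl : m - m' ≡ n - n' [MOD addOrderOf g] :=
      Nat.ModEq.add_left_cancel h (by rwa [Nat.add_sub_cancel' hm', Nat.add_sub_cancel' hn'])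
    let y : ZeroSumMonoid ({g, -g} : Set G) :=
      ⟨plusMinusSeq g m' n', plusMinusSeq_mem_zeroSumMonoid_iff.2 h⟩
    let z : ZeroSumMonoid ({g, -g} : Set G) :=
      ⟨plusMinusSeq g (m - m') (n - n'), plusMinusSeq_mem_zeroSumMonoid_iff.2 hcompl⟩
    have hyz : x = y * z := Subtype.ext <| by
      rw [hx, Submonoid.coe_mul, plusMinusSeq_mul, Nat.add_sub_cancel' hm', Nat.add_sub_cancel' hn']
    have := hirr hyz
    rw [isUnit_iff_eq_one, isUnit_iff_eq_one, eq_one_iff_of_coe_eq hg (x := y) rfl,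
      eq_one_iff_of_coe_eq hg (x := z) rfl] at this
    omega
  · obtain ⟨m₁, n₁, hy⟩ := exists_eq_plusMinusSeq y.2
    obtain ⟨m₂, n₂, hz⟩ := exists_eq_plusMinusSeq z.2
    have hsum : plusMinusSeq g m n = plusMinusSeq g (m₁ + m₂) (n₁ + n₂) := by
      rw [← hx, hyz, Submonoid.coe_mul, hy, hz, plusMinusSeq_mul]
    obtain ⟨rfl, rfl⟩ := (plusMinusSeq_inj hg).1 hsum
    rw [isUnit_iff_eq_one, isUnit_iff_eq_one, eq_one_iff_of_coe_eq hg hy,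
      eq_one_iff_of_coe_eq hg hz]
    have := hmin m₁ (Nat.le_add_right _ _) n₁ (Nat.le_add_right _ _)
      (plusMinusSeq_mem_zeroSumMonoid_iff.1 (hy ▸ y.2))
    omega

theorem irreducible_iff_coe_eq (hg : 2 < addOrderOf g) (x : ZeroSumMonoid ({g, -g} : Set G)) :
    Irreducible x ↔ (x : Multiplicative (Multiset G)) = plusMinusSeq g (addOrderOf g) 0 ∨
      (x : Multiplicative (Multiset G)) = plusMinusSeq g 0 (addOrderOf g) ∨
      (x : Multiplicative (Multiset G)) = plusMinusSeq g 1 1 := by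
  have hne := ne_neg_self_of_two_lt_addOrderOf hg
  obtain ⟨m, n, hx⟩ := exists_eq_plusMinusSeq x.2
  rw [irreducible_iff_minimal_of_coe_eq hne hx, Nat.minimal_modEq_pair_iff hg.le
    (plusMinusSeq_mem_zeroSumMonoid_iff.1 (hx ▸ x.2)), hx, plusMinusSeq_inj hne,
    plusMinusSeq_inj hne, plusMinusSeq_inj hne]

theorem lengthsOf_eq (hg : 2 < addOrderOf g) (b : ZeroSumMonoid ({g, -g} : Set G))
    (hb : (b : Multiplicative (Multiset G)) = plusMinusSeq g (addOrderOf g) (addOrderOf g)) :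
    LengthsOf b = {2, addOrderOf g} := by
  set e := addOrderOf g
  have hne := ne_neg_self_of_two_lt_addOrderOf hg
  have he : e ≡ 0 [MOD e] := Nat.modEq_zero_iff_dvd.2 dvd_rfl
  let v₁ : ZeroSumMonoid ({g, -g} : Set G) :=
    ⟨plusMinusSeq g e 0, plusMinusSeq_mem_zeroSumMonoid_iff.2 he⟩
  let v₂ : ZeroSumMonoid ({g, -g} : Set G) :=
    ⟨plusMinusSeq g 0 e, plusMinusSeq_mem_zeroSumMonoid_iff.2 he.symm⟩
  let v₃ : ZeroSumMonoid ({g, -g} : Set G) :=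
    ⟨plusMinusSeq g 1 1, plusMinusSeq_mem_zeroSumMonoid_iff.2 rfl⟩
  have hv₁ : Irreducible v₁ := (irreducible_iff_coe_eq hg v₁).2 (Or.inl rfl)
  have hv₂ : Irreducible v₂ := (irreducible_iff_coe_eq hg v₂).2 (Or.inr (Or.inl rfl))
  have hv₃ : Irreducible v₃ := (irreducible_iff_coe_eq hg v₃).2 (Or.inr (Or.inr rfl))
  ext k
  simp only [Set.mem_insert_iff, Set.mem_singleton_iff]
  constructor
  · rintro ⟨s, rfl, hs, hprod⟩
    obtain ⟨p, q, r, hprod', hcard⟩ := Multiset.exists_prod_eq_pow_mul_pow_mul_pow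
      (forall_mem_map_iff.2 fun x hx ↦ (irreducible_iff_coe_eq hg x).1 (hs x hx))
    rw [← Submonoid.coe_multiset_prod, hprod, hb, plusMinusSeq_pow, plusMinusSeq_pow,
      plusMinusSeq_pow, plusMinusSeq_mul, plusMinusSeq_mul, plusMinusSeq_inj hne] at hprod'
    simp only [mul_zero, mul_one, add_zero, zero_add] at hprod'
    rw [← card_map Subtype.val s, hcard]
    exact Nat.eq_two_or_eq_of_mul_add_eq (by omega) hprod'.1.symm hprod'.2.symm
  · rintro (rfl | rfl)
    · refine ⟨{v₁, v₂}, rfl, by simpa using ⟨hv₁, hv₂⟩, Subtype.ext ?_⟩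
      simp [v₁, v₂, hb, plusMinusSeq_mul]
    · refine ⟨replicate e v₃, card_replicate _ _, fun x hx ↦ eq_of_mem_replicate hx ▸ hv₃,
        ?_⟩
      rw [prod_replicate, Subtype.ext_iff, SubmonoidClass.coe_pow, plusMinusSeq_pow, hb]
      simp

end ZeroSumMonoid

theorem lengths_of_special_element_general {G : Type*} [AddCommGroup G] (g : G) (d : ℕ) (hd : 0 < d)
    (hg : addOrderOf g = d + 2)
    {M : Type*} [CancelCommMonoid M] (u₁ : M) (hu : Irreducible u₁)
    (b : ↥(ZeroSumMonoid ({g, -g} : Set G)))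
    (hb : (b : Multiplicative (Multiset G)) =
      Multiplicative.ofAdd (Multiset.replicate (d + 2) g + Multiset.replicate (d + 2) (-g))) :
    LengthsOf ((u₁, b) : M × ↥(ZeroSumMonoid ({g, -g} : Set G))) = {3, 3 + d} := by
  have hb' : (b : Multiplicative (Multiset G)) = plusMinusSeq g (addOrderOf g) (addOrderOf g) := by
    rw [hb, hg, plusMinusSeq]
  rw [lengthsOf_prod_mk_of_irreducible hu, ZeroSumMonoid.lengthsOf_eq (by omega) b hb', hg,
    Set.image_insert_eq, Set.image_singleton]
  congr 2
  omega

/-- In `H₁ × B({g,-g})` with `g` of order `d+2`, the set of lengths of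
`u₁ · g^{d+2} · (-g)^{d+2}` (for `u₁` an atom of the reduced atomic monoid `H₁`)
is `{3, 3+d}`. -/
theorem lengths_of_special_element {G : Type*} [AddCommGroup G] (g : G) (d : ℕ) (hd : 0 < d)
    (hg : addOrderOf g = d + 2)
    {M : Type*} [CancelCommMonoid M] (hred : ∀ u : M, IsUnit u → u = 1)
    (hatomic : IsAtomicMonoid M) (u₁ : M) (hu : Irreducible u₁)
    (b : ↥(ZeroSumMonoid ({g, -g} : Set G)))
    (hb : (b : Multiplicative (Multiset G)) =
      Multiplicative.ofAdd (Multiset.replicate (d + 2) g + Multiset.replicate (d + 2) (-g))) :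
    LengthsOf ((u₁, b) : M × ↥(ZeroSumMonoid ({g, -g} : Set G))) = {3, 3 + d} :=
  lengths_of_special_element_general g d hd hg u₁ hu b hb
end

section
/- For every subset G₀ of an abelian group G, the monoid of zero-sum sequences B(G₀) is a Krull monoid. -/
universe u

/-- Every monoid of zero-sum sequences is a Krull monoid. -/
theorem zeroSumMonoid_isKrull {G : Type u} [AddCommGroup G] (G₀ : Set G) :
    IsKrullMonoid ↥(ZeroSumMonoid G₀) := by
  classical
  refine ⟨G, { toFun := fun S => Multiplicative.ofAdd (Multiset.toFinsupp (Multiplicative.toAdd S.val)), map_one' := by simp, map_mul' := by intro a b; simp }, ?_⟩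
  intro a b
  constructor
  · rintro ⟨c, rfl⟩
    exact ⟨Multiplicative.ofAdd (Multiset.toFinsupp (Multiplicative.toAdd c.val)), by simp⟩
  · rintro ⟨c, hc⟩
    -- hc : ofAdd (toFinsupp B) = ofAdd (toFinsupp A) * c
    have hle : Multiplicative.toAdd a.val ≤ Multiplicative.toAdd b.val := by
      have h2 : Multiset.toFinsupp (Multiplicative.toAdd b.val) =
          Multiset.toFinsupp (Multiplicative.toAdd a.val) + Multiplicative.toAdd c := by
        have := congrArg Multiplicative.toAdd hc
        simpa using this
      have : Multiset.toFinsupp (Multiplicative.toAdd a.val) ≤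
          Multiset.toFinsupp (Multiplicative.toAdd b.val) := le_iff_exists_add.2 ⟨_, h2⟩
      have h4 : Finsupp.orderIsoMultiset.symm (Multiplicative.toAdd a.val) ≤
          Finsupp.orderIsoMultiset.symm (Multiplicative.toAdd b.val) := by
        simpa [Finsupp.coe_orderIsoMultiset_symm] using this
      exact Finsupp.orderIsoMultiset.symm.le_iff_le.1 h4
    obtain ⟨d, hd⟩ := Multiset.le_iff_exists_add.1 hle
    have hd' : (∀ x ∈ d, x ∈ G₀) ∧ d.sum = 0 := by
      constructor
      · intro x hx
        exact b.2.1 x (by rw [hd]; exact Multiset.mem_add.2 (Or.inr hx))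
      · have := b.2.2
        rw [hd, Multiset.sum_add, a.2.2, zero_add] at this
        exact this
    refine ⟨⟨Multiplicative.ofAdd d, hd'⟩, ?_⟩
    apply Subtype.ext
    show b.val = a.val * Multiplicative.ofAdd d
    apply Multiplicative.toAdd.injective
    simpa using hd
end
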